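/- If a joint process Pr(X,Y) is generated by a transducer driven by an input process X (i.e., there is a latent process R such that at each step, (Y_t, R_{t+1}) depends only on (X_t, R_t) via a fixed stochastic kernel, and future inputs are conditionally independent of (Y_{0:t}, R_{0:t}) given X_{0:t}), then the Acausality AC[X ⟹ Y] = ∑_{t=0}^∞ I[Y_{0:t}; X_{t:∞} | X_{0:t}] equals zero. -/
import Mathlib


open Finset
open scoped ENNReal

/-- Conditional mutual information `I[A;B|C]` of a joint distribution `p` over finite
types, via the standard formula `∑ p(a,b,c) log( p(a,b,c) p(c) / (p(a,c) p(b,c)) )`. -/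
noncomputable def cmi {A B C : Type} [Fintype A] [Fintype B] [Fintype C]
    (p : A → B → C → ℝ) : ℝ :=
  ∑ a : A, ∑ b : B, ∑ c : C,
    p a b c *
      Real.log ((p a b c * (∑ a' : A, ∑ b' : B, p a' b' c)) /
        ((∑ b' : B, p a b' c) * (∑ a' : A, p a' b c)))

/-- Concatenate a word of length `t` with a word of length `u` into a word of
length `t + u`. -/
def jn {A : Type} (t u : ℕ) (p : Fin t → A) (f : Fin u → A) : Fin (t + u) → A :=
  fun i => if h : i.1 < t then p ⟨i.1, h⟩ else f ⟨i.1 - t, by have := i.isLt; omega⟩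

/-- The time-`t`, horizon-`(t+u)` term of the Acausality: the conditional mutual
information `I[Y_{0:t} ; X_{t:t+u} | X_{0:t}]` computed from the finite-dimensional
distributions of the joint process `(X, Y)`. -/
noncomputable def acTerm {X Y : Type} [Fintype X] [Fintype Y]
    (P : (n : ℕ) → (Fin n → X) → (Fin n → Y) → ℝ) (t u : ℕ) : ℝ :=
  cmi (fun (a : Fin t → Y) (b : Fin u → X) (c : Fin t → X) =>
    ∑ g : Fin u → Y, P (t + u) (jn t u c b) (jn t u a g))

/-- The Acausality `AC[X ⟹ Y] = ∑_t I[Y_{0:t} ; X_{t:∞} | X_{0:t}]`, each time-`t` term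
being the supremum over finite horizons of the finite-dimensional conditional mutual
informations. -/
noncomputable def acausality {X Y : Type} [Fintype X] [Fintype Y]
    (P : (n : ℕ) → (Fin n → X) → (Fin n → Y) → ℝ) : ℝ≥0∞ :=
  ∑' t : ℕ, ⨆ u : ℕ, ENNReal.ofReal (acTerm P t u)

/-- Conditional word probability generated by a transducer: sum over latent trajectories
of the initial latent probability times the product of kernel entries. -/
def wordProb {X Y R : Type} [Fintype R] (T : R → X → Y → R → ℝ) (π : R → ℝ)
    (L : ℕ) (x : Fin L → X) (y : Fin L → Y) : ℝ :=
  ∑ r : Fin (L + 1) → R, π (r 0) * ∏ i : Fin L, T (r i.castSucc) (x i) (y i) (r i.succ)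

/-- The joint process over `(X, Y)` obtained by driving a transducer with an input
process in a feedforward manner: the inputs are generated independently of past outputs
and latents, so the finite-dimensional joint distribution is the input-word probability
times the transducer's conditional word probability. -/
def jointP {X Y R : Type} [Fintype R]
    (Pin : (n : ℕ) → (Fin n → X) → ℝ)
    (T : R → X → Y → R → ℝ) (π : R → ℝ) :
    (n : ℕ) → (Fin n → X) → (Fin n → Y) → ℝ :=
  fun n x y => Pin n x * wordProb T π n x y

/-! ### Auxiliary lemmas -/

lemma sum_snoc_fn {A M : Type} [Fintype A] [AddCommMonoid M] (n : ℕ)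
    (f : (Fin (n+1) → A) → M) :
    ∑ g : Fin (n+1) → A, f g = ∑ g : Fin n → A, ∑ a : A, f (Fin.snoc g a) := by
  rw [← (Fin.snocEquiv (fun _ => A)).sum_comp f]
  rw [Fintype.sum_prod_type, Finset.sum_comm]
  simp [Fin.snocEquiv]

lemma jn_zero' {A : Type} (t : ℕ) (p : Fin t → A) (f : Fin 0 → A) : jn t 0 p f = p := by
  funext i
  have h : i.1 < t := i.isLt
  simp [jn, h]

lemma jn_castSucc' {A : Type} (t u : ℕ) (p : Fin t → A) (f : Fin (u+1) → A) :
    (fun i : Fin (t+u) => jn t (u+1) p f i.castSucc) = jn t u p (fun j => f j.castSucc) := by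
  funext i
  simp only [jn, Fin.coe_castSucc]
  split_ifs with h
  · rfl
  · congr 1

lemma jn_snoc' {A : Type} (t u : ℕ) (p : Fin t → A) (f : Fin u → A) (a : A) :
    jn t (u+1) p (Fin.snoc f a) = Fin.snoc (jn t u p f) a := by
  funext i
  simp only [jn, Fin.snoc, Fin.castLT, cast_eq]
  split_ifs with h1 h2 h3 h4 h5
  all_goals
    first
      | rfl
      | omega
      | (exfalso; simp only [Nat.add_eq] at *; omega)
      | (congr 1; apply Fin.ext; simp)

section transducer
variable {X Y R : Type} [Fintype X] [Fintype Y] [Fintype R]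
variable (T : R → X → Y → R → ℝ) (π : R → ℝ)

lemma wordProb_nonneg (hTnn : ∀ r x y r', 0 ≤ T r x y r') (hπnn : ∀ r, 0 ≤ π r)
    (L : ℕ) (x : Fin L → X) (y : Fin L → Y) : 0 ≤ wordProb T π L x y :=
  Finset.sum_nonneg fun _ _ => mul_nonneg (hπnn _)
    (Finset.prod_nonneg fun _ _ => hTnn _ _ _ _)

lemma wordProb_snoc (hTsum : ∀ r x, ∑ y : Y, ∑ r' : R, T r x y r' = 1)
    (L : ℕ) (x : Fin (L+1) → X) (y : Fin L → Y) :
    ∑ yL : Y, wordProb T π (L+1) x (Fin.snoc y yL)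
      = wordProb T π L (fun i => x i.castSucc) y := by
  unfold wordProb
  have h1 : ∀ yL : Y, (∑ r : Fin (L+1+1) → R, π (r 0) * ∏ i : Fin (L+1),
        T (r i.castSucc) (x i) ((Fin.snoc y yL : Fin (L+1) → Y) i) (r i.succ))
      = ∑ r : Fin (L+1) → R, ∑ rL : R, π ((Fin.snoc r rL : Fin (L+2) → R) 0) *
          ∏ i : Fin (L+1), T ((Fin.snoc r rL : Fin (L+2) → R) i.castSucc) (x i)
            ((Fin.snoc y yL : Fin (L+1) → Y) i) ((Fin.snoc r rL : Fin (L+2) → R) i.succ) :=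
    fun yL => sum_snoc_fn (L+1) _
  simp only [h1]
  rw [Finset.sum_comm]
  refine Finset.sum_congr rfl fun r _ => ?_
  have h0 : ∀ rL : R, (Fin.snoc r rL : Fin (L+2) → R) 0 = r 0 := by
    intro rL
    have : (0 : Fin (L+2)) = Fin.castSucc 0 := rfl
    rw [this, Fin.snoc_castSucc]
  have hprod : ∀ (rL : R) (yL : Y),
      ∏ i : Fin (L+1), T ((Fin.snoc r rL : Fin (L+2) → R) i.castSucc) (x i)
        ((Fin.snoc y yL : Fin (L+1) → Y) i) ((Fin.snoc r rL : Fin (L+2) → R) i.succ)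
      = (∏ i : Fin L, T (r i.castSucc) (x i.castSucc) (y i) (r i.succ))
        * T (r (Fin.last L)) (x (Fin.last L)) yL rL := by
    intro rL yL
    rw [Fin.prod_univ_castSucc]
    congr 1
    · refine Finset.prod_congr rfl fun i _ => ?_
      rw [Fin.snoc_castSucc, Fin.snoc_castSucc,
        show i.castSucc.succ = (i.succ).castSucc from by ext; simp, Fin.snoc_castSucc]
    · rw [Fin.snoc_castSucc, Fin.snoc_last, Fin.succ_last, Fin.snoc_last]
  calc ∑ yL : Y, ∑ rL : R, π ((Fin.snoc r rL : Fin (L+2) → R) 0) *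
        ∏ i : Fin (L+1), T ((Fin.snoc r rL : Fin (L+2) → R) i.castSucc) (x i)
          ((Fin.snoc y yL : Fin (L+1) → Y) i) ((Fin.snoc r rL : Fin (L+2) → R) i.succ)
      = ∑ yL : Y, ∑ rL : R,
          (π (r 0) * ∏ i : Fin L, T (r i.castSucc) (x i.castSucc) (y i) (r i.succ))
          * T (r (Fin.last L)) (x (Fin.last L)) yL rL := by
        refine Finset.sum_congr rfl fun yL _ => Finset.sum_congr rfl fun rL _ => ?_
        rw [h0, hprod]; ring
    _ = (π (r 0) * ∏ i : Fin L, T (r i.castSucc) (x i.castSucc) (y i) (r i.succ)) *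
          ∑ yL : Y, ∑ rL : R, T (r (Fin.last L)) (x (Fin.last L)) yL rL := by
        rw [Finset.mul_sum]; refine Finset.sum_congr rfl fun yL _ => ?_
        rw [Finset.mul_sum]
    _ = _ := by rw [hTsum]; ring

lemma wordProb_norm (hTsum : ∀ r x, ∑ y : Y, ∑ r' : R, T r x y r' = 1)
    (hπ : ∑ r : R, π r = 1) :
    ∀ (L : ℕ) (x : Fin L → X), ∑ y : Fin L → Y, wordProb T π L x y = 1 := by
  intro L
  induction L with
  | zero =>
      intro x
      rw [Fintype.sum_unique]
      unfold wordProb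
      simp only [Finset.univ_eq_empty, Finset.prod_empty, mul_one]
      rw [← (Equiv.funUnique (Fin 1) R).symm.sum_comp (fun r => π (r 0))]
      simpa using hπ
  | succ L ih =>
      intro x
      rw [sum_snoc_fn L (fun y => wordProb T π (L+1) x y)]
      calc ∑ y : Fin L → Y, ∑ yL : Y, wordProb T π (L+1) x (Fin.snoc y yL)
          = ∑ y : Fin L → Y, wordProb T π L (fun i => x i.castSucc) y :=
            Finset.sum_congr rfl fun y _ => wordProb_snoc T π hTsum L x y
        _ = 1 := ih _

lemma wordProb_marg (hTsum : ∀ r x, ∑ y : Y, ∑ r' : R, T r x y r' = 1)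
    (t : ℕ) (c : Fin t → X) (a : Fin t → Y) :
    ∀ (u : ℕ) (b : Fin u → X),
      ∑ g : Fin u → Y, wordProb T π (t+u) (jn t u c b) (jn t u a g)
        = wordProb T π t c a := by
  intro u
  induction u with
  | zero =>
      intro b
      rw [Fintype.sum_unique]
      rw [jn_zero', jn_zero']
      rfl
  | succ u ih =>
      intro b
      rw [sum_snoc_fn u (fun g => wordProb T π (t+(u+1)) (jn t (u+1) c b) (jn t (u+1) a g))]
      calc ∑ g : Fin u → Y, ∑ gL : Y,
            wordProb T π (t+(u+1)) (jn t (u+1) c b) (jn t (u+1) a (Fin.snoc g gL))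
          = ∑ g : Fin u → Y, ∑ gL : Y,
            wordProb T π (t+u+1) (jn t (u+1) c b) (Fin.snoc (jn t u a g) gL) := by
              refine Finset.sum_congr rfl fun g _ => Finset.sum_congr rfl fun gL _ => ?_
              rw [jn_snoc']
              rfl
        _ = ∑ g : Fin u → Y,
            wordProb T π (t+u) (fun i => jn t (u+1) c b i.castSucc) (jn t u a g) :=
              Finset.sum_congr rfl fun g _ => wordProb_snoc T π hTsum (t+u) _ _
        _ = ∑ g : Fin u → Y,
            wordProb T π (t+u) (jn t u c (fun j => b j.castSucc)) (jn t u a g) := by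
              rw [jn_castSucc']
        _ = wordProb T π t c a := ih _

end transducer

/-- If a joint process `Pr(X, Y)` is generated by a transducer driven by
the input process `X` in a feedforward manner (at each step `(Y_t, R_{t+1})` depends only
on `(X_t, R_t)` through a fixed stochastic kernel, and future inputs are conditionally
independent of past outputs and latents given past inputs), then the Acausality
`AC[X ⟹ Y] = ∑_t I[Y_{0:t}; X_{t:∞} | X_{0:t}]` is zero. -/
theorem transducer_driven_acausality_zero
    {X Y R : Type} [Fintype X] [Fintype Y] [Fintype R]
    (Pin : (n : ℕ) → (Fin n → X) → ℝ)
    (hPnn : ∀ n x, 0 ≤ Pin n x)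
    (hPnorm : ∀ n, ∑ x : Fin n → X, Pin n x = 1)
    (hPcons : ∀ n (x : Fin n → X), ∑ c : X, Pin (n + 1) (Fin.snoc x c) = Pin n x)
    (T : R → X → Y → R → ℝ) (π : R → ℝ)
    (hTnn : ∀ r x y r', 0 ≤ T r x y r')
    (hTsum : ∀ r x, ∑ y : Y, ∑ r' : R, T r x y r' = 1)
    (hπnn : ∀ r, 0 ≤ π r) (hπ : ∑ r : R, π r = 1) :
    acausality (jointP Pin T π) = 0 := by
  have hterm : ∀ t u, acTerm (jointP Pin T π) t u = 0 := by
    intro t u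
    unfold acTerm cmi
    have hq : ∀ (a : Fin t → Y) (b : Fin u → X) (c : Fin t → X),
        (∑ g : Fin u → Y, jointP Pin T π (t + u) (jn t u c b) (jn t u a g))
          = Pin (t+u) (jn t u c b) * wordProb T π t c a := by
      intro a b c
      unfold jointP
      rw [← Finset.mul_sum, wordProb_marg T π hTsum t c a u b]
    simp only [hq]
    refine Finset.sum_eq_zero fun a _ => Finset.sum_eq_zero fun b _ =>
      Finset.sum_eq_zero fun c _ => ?_
    by_cases h : Pin (t+u) (jn t u c b) * wordProb T π t c a = 0
    · rw [h, zero_mul]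
    · have hPin : Pin (t+u) (jn t u c b) ≠ 0 := fun hh => h (by rw [hh, zero_mul])
      have hW : wordProb T π t c a ≠ 0 := fun hh => h (by rw [hh, mul_zero])
      have hSS : (∑ a' : Fin t → Y, ∑ b' : Fin u → X,
            Pin (t+u) (jn t u c b') * wordProb T π t c a')
          = ∑ b' : Fin u → X, Pin (t+u) (jn t u c b') := by
        rw [Finset.sum_comm]
        refine Finset.sum_congr rfl fun b' _ => ?_
        rw [← Finset.mul_sum, wordProb_norm T π hTsum hπ t c, mul_one]
      have hSb : (∑ b' : Fin u → X, Pin (t+u) (jn t u c b') * wordProb T π t c a)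
          = (∑ b' : Fin u → X, Pin (t+u) (jn t u c b')) * wordProb T π t c a := by
        rw [Finset.sum_mul]
      have hSa : (∑ a' : Fin t → Y, Pin (t+u) (jn t u c b) * wordProb T π t c a')
          = Pin (t+u) (jn t u c b) := by
        rw [← Finset.mul_sum, wordProb_norm T π hTsum hπ t c, mul_one]
      rw [hSS, hSb, hSa]
      have hF : (∑ b' : Fin u → X, Pin (t+u) (jn t u c b')) ≠ 0 := by
        intro hh
        apply hPin
        have hle : Pin (t+u) (jn t u c b) ≤ ∑ b' : Fin u → X, Pin (t+u) (jn t u c b') :=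
          Finset.single_le_sum (f := fun b' => Pin (t+u) (jn t u c b'))
            (fun i _ => hPnn _ _) (Finset.mem_univ b)
        have := hPnn (t+u) (jn t u c b)
        linarith [hle, hh ▸ hle]
      have hrw : (Pin (t+u) (jn t u c b) * wordProb T π t c a *
            (∑ b' : Fin u → X, Pin (t+u) (jn t u c b'))) /
          ((∑ b' : Fin u → X, Pin (t+u) (jn t u c b')) * wordProb T π t c a *
            Pin (t+u) (jn t u c b)) = 1 := by
        rw [show Pin (t+u) (jn t u c b) * wordProb T π t c a *
              (∑ b' : Fin u → X, Pin (t+u) (jn t u c b'))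
            = (∑ b' : Fin u → X, Pin (t+u) (jn t u c b')) * wordProb T π t c a *
              Pin (t+u) (jn t u c b) from by ring]
        exact div_self (by
          exact mul_ne_zero (mul_ne_zero hF hW) hPin)
      rw [hrw, Real.log_one, mul_zero]
  unfold acausality
  have h0 : ∀ t u : ℕ, ENNReal.ofReal (acTerm (jointP Pin T π) t u) = 0 := by
    intro t u; rw [hterm t u]; exact ENNReal.ofReal_zero
  simp only [h0, iSup_const, tsum_zero]
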